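/- arXiv:1712.05361 — 2 statements merged into one kernel-verified Lean document; each statement's English description precedes it below -/
import Mathlib

section
/- Let F be a finite field of characteristic p. The set G_O := { AffMap(α, β) : α, β ∈ F⟦X⟧, α with nonzero constant term } is a subgroup of Aut(T_F) and is coarsely diagonal: for every g ∈ G_O and every word u ∈ List F, the element (g_u)⁻¹ * g has finite order (in fact, order dividing p). -/
namespace RoverNekrashevych

/-- The state (section) of `f` at the word `u`. -/
def state {X : Type*} (f : List X → List X) (u : List X) : List X → List X :=
  fun w => (f (u ++ w)).drop u.length

/-- A function on words is finite-state if it has only finitely many states. -/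
def FiniteStateFun {X : Type*} (f : List X → List X) : Prop :=
  Set.Finite {g : List X → List X | ∃ u : List X, g = state f u}

/-- The truncated power series `Σ_{i < length w} w_i X^i` determined by a word. -/
noncomputable def wordToSeries {F : Type*} [CommSemiring F] (w : List F) : PowerSeries F :=
  PowerSeries.mk fun i => w.getD i 0

/-- The affine map `AffMap (α, β)` on words: it sends `(c_0, …, c_{e-1})` to the word of
the first `e` coefficients of `α · (Σ_{i<e} c_i X^i) + β`. -/
noncomputable def affWord {F : Type*} [CommSemiring F] (α β : PowerSeries F) (w : List F) :
    List F :=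
  List.ofFn fun i : Fin w.length => PowerSeries.coeff i (α * wordToSeries w + β)

/-- `f` is an automorphism of the infinite rooted tree with vertex set `List X`. -/
def IsTreeAut {X : Type*} (f : Equiv.Perm (List X)) : Prop :=
  f [] = [] ∧ ∀ (u : List X) (x : X), ∃ y : X, f (u ++ [x]) = f u ++ [y]

/-- `G` consists of tree automorphisms. -/
def IsTreeAutGroup {X : Type*} (G : Subgroup (Equiv.Perm (List X))) : Prop :=
  ∀ f ∈ G, IsTreeAut f

/-- `G` is coarsely diagonal: for `g ∈ G`, each state `g_u` is realized by some `g' ∈ G`,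
and `g'⁻¹ * g` has finite order. -/
def CoarselyDiagonal {X : Type*} (G : Subgroup (Equiv.Perm (List X))) : Prop :=
  ∀ g ∈ G, ∀ u : List X, ∃ g' ∈ G, ⇑g' = state (⇑g) u ∧ IsOfFinOrder (g'⁻¹ * g)

/-- The set `G_O` of all affine tree automorphisms `AffMap (α, β)` with
`α, β ∈ O = F⟦X⟧` and `α` a unit of `O`. -/
def AffSet (F : Type*) [Field F] : Set (Equiv.Perm (List F)) :=
  {g | ∃ α β : PowerSeries F, PowerSeries.constantCoeff α ≠ 0 ∧ ⇑g = affWord α β}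

/-! The state of `AffMap (α, β)` at a word `u` is again an affine map `AffMap (α, β')` with the
same linear part, since `α · (u + X ^ |u| · w) + β = (α · u + β) + X ^ |u| · (α · w)`: `β'` is
`α · u + β` with its first `|u|` coefficients removed. Hence `(g_u)⁻¹ * g` is the translation by
`α⁻¹ · (β - β')`, and its `p`-th power is the translation by `p · α⁻¹ · (β - β') = 0`. -/

open PowerSeries

section CommSemiring

variable {R : Type*} [CommSemiring R]

lemma coeff_wordToSeries (w : List R) (i : ℕ) : coeff i (wordToSeries w) = w.getD i 0 :=
  coeff_mk _ _

lemma wordToSeries_append (u w : List R) :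
    wordToSeries (u ++ w) = wordToSeries u + X ^ u.length * wordToSeries w := by
  ext i
  rw [map_add, coeff_X_pow_mul', coeff_wordToSeries, coeff_wordToSeries, coeff_wordToSeries]
  by_cases h : i < u.length
  · rw [if_neg (by omega), List.getD_append _ _ _ _ h, add_zero]
  · rw [if_pos (by omega), List.getD_append_right _ _ _ _ (by omega),
      List.getD_eq_default u _ (by omega), zero_add]

@[simp]
lemma length_affWord (α β : R⟦X⟧) (w : List R) : (affWord α β w).length = w.length := by
  simp [affWord]

lemma getElem_affWord (α β : R⟦X⟧) (w : List R) (i : ℕ) (h : i < (affWord α β w).length) :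
    (affWord α β w)[i] = coeff i (α * wordToSeries w + β) := by
  simp [affWord]

lemma coeff_mul_add_congr {α β S T : R⟦X⟧} {n i : ℕ} (hi : i < n)
    (h : ∀ j < n, coeff j S = coeff j T) :
    coeff i (α * S + β) = coeff i (α * T + β) := by
  rw [map_add, map_add, coeff_mul, coeff_mul]
  congr 1
  refine Finset.sum_congr rfl fun q hq => ?_
  rw [Finset.HasAntidiagonal.mem_antidiagonal] at hq
  rw [h q.2 (by omega)]

lemma affWord_affWord (α β α' β' : R⟦X⟧) (w : List R) :
    affWord α β (affWord α' β' w) = affWord (α * α') (α * β' + β) w := by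
  refine List.ext_getElem (by simp) fun i _ hi => ?_
  have hi' : i < w.length := by simpa using hi
  have hcoeff : ∀ j < w.length,
      coeff j (wordToSeries (affWord α' β' w)) = coeff j (α' * wordToSeries w + β') := by
    intro j hj
    rw [coeff_wordToSeries, List.getD_eq_getElem _ _ (by simpa using hj), getElem_affWord]
  rw [getElem_affWord, getElem_affWord, coeff_mul_add_congr hi' hcoeff]
  congr 1
  ring

@[simp]
lemma affWord_one_zero (w : List R) : affWord 1 0 w = w := by
  refine List.ext_getElem (by simp) fun i _ hi => ?_
  rw [getElem_affWord, one_mul, add_zero, coeff_wordToSeries, List.getD_eq_getElem _ _ hi]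

lemma affWord_nil (α β : R⟦X⟧) : affWord α β [] = [] := by
  simp [affWord]

noncomputable def stateShift (α β : R⟦X⟧) (u : List R) : R⟦X⟧ :=
  mk fun j => coeff (u.length + j) (α * wordToSeries u + β)

lemma take_affWord_append (α β : R⟦X⟧) (u w : List R) :
    (affWord α β (u ++ w)).take u.length = affWord α β u := by
  refine List.ext_getElem (by simp) fun i hi _ => ?_
  have hi' : i < u.length := by simpa using hi
  rw [List.getElem_take, getElem_affWord, getElem_affWord]
  refine coeff_mul_add_congr hi' fun j hj => ?_
  rw [coeff_wordToSeries, coeff_wordToSeries, List.getD_append _ _ _ _ hj]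

lemma drop_affWord_append (α β : R⟦X⟧) (u w : List R) :
    (affWord α β (u ++ w)).drop u.length = affWord α (stateShift α β u) w := by
  refine List.ext_getElem (by simp) fun i _ _ => ?_
  have hsplit : α * wordToSeries (u ++ w) + β
      = (α * wordToSeries u + β) + X ^ u.length * (α * wordToSeries w) := by
    rw [wordToSeries_append]; ring
  rw [List.getElem_drop, getElem_affWord, getElem_affWord, hsplit, stateShift, map_add,
    map_add (coeff i), coeff_mk, coeff_X_pow_mul', if_pos (by omega), Nat.add_sub_cancel_left,
    add_comm]

lemma affWord_append (α β : R⟦X⟧) (u w : List R) :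
    affWord α β (u ++ w) = affWord α β u ++ affWord α (stateShift α β u) w := by
  rw [← List.take_append_drop u.length (affWord α β (u ++ w)), take_affWord_append,
    drop_affWord_append]

lemma state_affWord (α β : R⟦X⟧) (u : List R) :
    state (affWord α β) u = affWord α (stateShift α β u) :=
  funext fun _ => drop_affWord_append α β u _

end CommSemiring

section CommRing

variable {R : Type*} [CommRing R]

noncomputable def affPerm (α : R⟦X⟧ˣ) (β : R⟦X⟧) : Equiv.Perm (List R) where
  toFun := affWord α β
  invFun := affWord ↑α⁻¹ (-(↑α⁻¹ * β))
  left_inv w := by simp [affWord_affWord]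
  right_inv w := by simp [affWord_affWord]

@[simp]
lemma coe_affPerm (α : R⟦X⟧ˣ) (β : R⟦X⟧) : ⇑(affPerm α β) = affWord α β := rfl

lemma affPerm_mul (α α' : R⟦X⟧ˣ) (β β' : R⟦X⟧) :
    affPerm α β * affPerm α' β' = affPerm (α * α') (α * β' + β) :=
  Equiv.ext fun w => affWord_affWord _ _ _ _ w

lemma affPerm_inv (α : R⟦X⟧ˣ) (β : R⟦X⟧) :
    (affPerm α β)⁻¹ = affPerm α⁻¹ (-(↑α⁻¹ * β)) :=
  Equiv.ext fun _ => rfl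

lemma affPerm_one_zero : affPerm (1 : R⟦X⟧ˣ) 0 = 1 :=
  Equiv.ext affWord_one_zero

lemma affPerm_one_pow (γ : R⟦X⟧) (n : ℕ) : affPerm 1 γ ^ n = affPerm 1 (n • γ) := by
  induction n with
  | zero => rw [pow_zero, zero_smul, affPerm_one_zero]
  | succ n ih =>
    rw [pow_succ, ih, affPerm_mul, succ_nsmul, Units.val_one, one_mul, one_mul, add_comm]

lemma affPerm_one_pow_charP (γ : R⟦X⟧) (p : ℕ) [CharP R p] : affPerm 1 γ ^ p = 1 := by
  rw [affPerm_one_pow, nsmul_eq_mul, ← map_natCast (C (R := R)), CharP.cast_eq_zero, map_zero,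
    zero_mul, affPerm_one_zero]

lemma affPerm_inv_mul_affPerm (α : R⟦X⟧ˣ) (β β' : R⟦X⟧) :
    (affPerm α β')⁻¹ * affPerm α β = affPerm 1 ((↑α⁻¹ : R⟦X⟧) * (β - β')) := by
  rw [affPerm_inv, affPerm_mul, inv_mul_cancel]
  congr 1
  ring

lemma isTreeAut_affPerm (α : R⟦X⟧ˣ) (β : R⟦X⟧) : IsTreeAut (affPerm α β) := by
  refine ⟨affWord_nil (α : R⟦X⟧) β, fun u x => ?_⟩
  obtain ⟨y, hy⟩ :=
    List.length_eq_one_iff.1 (length_affWord (α : R⟦X⟧) (stateShift α β u) [x])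
  exact ⟨y, by rw [coe_affPerm, affWord_append, hy]⟩

end CommRing

section Field

variable {F : Type*} [Field F]

lemma mem_affSet_iff {g : Equiv.Perm (List F)} :
    g ∈ AffSet F ↔ ∃ (α : F⟦X⟧ˣ) (β : F⟦X⟧), g = affPerm α β := by
  constructor
  · rintro ⟨α, β, hα, hg⟩
    obtain ⟨a, rfl⟩ := isUnit_iff_constantCoeff.2 (isUnit_iff_ne_zero.2 hα)
    exact ⟨a, β, Equiv.coe_fn_injective hg⟩
  · rintro ⟨α, β, rfl⟩
    exact ⟨α, β, (isUnit_iff_constantCoeff.1 α.isUnit).ne_zero, rfl⟩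

variable (F) in
noncomputable def affSubgroup : Subgroup (Equiv.Perm (List F)) where
  carrier := AffSet F
  one_mem' := mem_affSet_iff.2 ⟨1, 0, affPerm_one_zero.symm⟩
  mul_mem' := by
    rintro _ _ hg hg'
    obtain ⟨α, β, rfl⟩ := mem_affSet_iff.1 hg
    obtain ⟨α', β', rfl⟩ := mem_affSet_iff.1 hg'
    exact mem_affSet_iff.2 ⟨α * α', _, affPerm_mul α α' β β'⟩
  inv_mem' := by
    rintro _ hg
    obtain ⟨α, β, rfl⟩ := mem_affSet_iff.1 hg
    exact mem_affSet_iff.2 ⟨α⁻¹, _, affPerm_inv α β⟩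

end Field

theorem affGroup_coarselyDiagonal_general {F : Type*} [Field F]
    (p : ℕ) (hp : p.Prime) [CharP F p] :
    (∃ G : Subgroup (Equiv.Perm (List F)), (G : Set (Equiv.Perm (List F))) = AffSet F) ∧
    ∀ G : Subgroup (Equiv.Perm (List F)), (G : Set (Equiv.Perm (List F))) = AffSet F →
      IsTreeAutGroup G ∧ CoarselyDiagonal G ∧
      ∀ g ∈ G, ∀ u : List F, ∃ g' ∈ G, ⇑g' = state (⇑g) u ∧ (g'⁻¹ * g) ^ p = 1 := by
  refine ⟨⟨affSubgroup F, rfl⟩, fun G hG => ?_⟩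
  have mem_G : ∀ g, g ∈ G ↔ ∃ (α : F⟦X⟧ˣ) (β : F⟦X⟧), g = affPerm α β := fun g => by
    rw [← SetLike.mem_coe, hG, mem_affSet_iff]
  have state_mem : ∀ g ∈ G, ∀ u, ∃ g' ∈ G, ⇑g' = state ⇑g u ∧ (g'⁻¹ * g) ^ p = 1 := by
    intro g hg u
    obtain ⟨α, β, rfl⟩ := (mem_G g).1 hg
    refine ⟨affPerm α (stateShift α β u), (mem_G _).2 ⟨_, _, rfl⟩, ?_, ?_⟩
    · rw [coe_affPerm, coe_affPerm, state_affWord]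
    · rw [affPerm_inv_mul_affPerm, affPerm_one_pow_charP]
  refine ⟨fun g hg => ?_, fun g hg u => ?_, state_mem⟩
  · obtain ⟨α, β, rfl⟩ := (mem_G g).1 hg
    exact isTreeAut_affPerm α β
  · obtain ⟨g', hg', hstate, hpow⟩ := state_mem g hg u
    exact ⟨g', hg', hstate, isOfFinOrder_iff_pow_eq_one.2 ⟨p, hp.pos, hpow⟩⟩

/-- Let `F` be a finite field of characteristic `p`.  The set
`G_O = { AffMap (α, β) : α, β ∈ F⟦X⟧, α(0) ≠ 0 }` is a subgroup of `Aut(T_F)` and is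
coarsely diagonal; in fact for every `g ∈ G_O` and every word `u`, the element
`(g_u)⁻¹ * g` has order dividing `p`. -/
theorem affGroup_coarselyDiagonal {F : Type*} [Field F] [Fintype F]
    (p : ℕ) (hp : p.Prime) [CharP F p] :
    (∃ G : Subgroup (Equiv.Perm (List F)), (G : Set (Equiv.Perm (List F))) = AffSet F) ∧
    ∀ G : Subgroup (Equiv.Perm (List F)), (G : Set (Equiv.Perm (List F))) = AffSet F →
      IsTreeAutGroup G ∧ CoarselyDiagonal G ∧
      ∀ g ∈ G, ∀ u : List F, ∃ g' ∈ G, ⇑g' = state (⇑g) u ∧ (g'⁻¹ * g) ^ p = 1 :=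
  affGroup_coarselyDiagonal_general p hp

end RoverNekrashevych
end

section
/- Let F be a field and let f ∈ F[X] be a polynomial with f(0) ≠ 0 (so f is a unit of F⟦X⟧). Let R := { β ∈ F⟦X⟧ : ∃ m ∈ ℕ, ∃ p ∈ F[X], f^m · β = p in F⟦X⟧ }, the image in F⟦X⟧ of the localization F[X][1/f]. Then for every β ∈ F⟦X⟧ and every j ∈ ℕ: β ∈ R if and only if shift_j β ∈ R. -/
/-! Writing `β = X^j · shift_j β + trunc_j β`, one direction is closure of `R` under ring
operations, since polynomials lie in `R`. For the other, `f^m · X^j · shift_j β` is a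
polynomial power series, hence a polynomial divisible by `X^j` in `F[X]`, so
`f^m · shift_j β` is itself a polynomial. -/

namespace RoverNekrashevych

/-- The shift of a power series: `(shift j σ)_i = σ_{i+j}`, so that
`σ = trunc_j σ + X^j · shift j σ`. -/
noncomputable def shift {F : Type*} [CommSemiring F] (j : ℕ) (σ : PowerSeries F) :
    PowerSeries F :=
  PowerSeries.mk fun i => PowerSeries.coeff (i + j) σ

/-- The image of the localization `F[X][1/f]` inside `F⟦X⟧`: the ring of `S`-integers for
`S` the places dividing `f` together with the place at infinity. -/
def Rset {F : Type*} [Field F] (f : Polynomial F) : Set (PowerSeries F) :=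
  {β | ∃ (m : ℕ) (p : Polynomial F), (f : PowerSeries F) ^ m * β = (p : PowerSeries F)}

open PowerSeries

theorem X_pow_mul_shift_add_trunc {R : Type*} [CommSemiring R] (j : ℕ) (σ : R⟦X⟧) :
    X ^ j * shift j σ + (trunc j σ : R⟦X⟧) = σ :=
  (eq_X_pow_mul_shift_add_trunc j σ).symm

theorem exists_coe_eq_of_X_pow_mul_eq_coe {R : Type*} [CommSemiring R] {j : ℕ} {φ : R⟦X⟧}
    {p : Polynomial R} (h : X ^ j * φ = (p : R⟦X⟧)) : ∃ q : Polynomial R, φ = q := by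
  have hdvd : Polynomial.X ^ j ∣ p := by
    rw [Polynomial.X_pow_dvd_iff]
    intro d hd
    rw [← Polynomial.coeff_coe, ← h]
    exact X_pow_dvd_iff.mp (dvd_mul_right _ _) d hd
  obtain ⟨q, rfl⟩ := hdvd
  refine ⟨q, X_pow_mul_cancel (k := j) ?_⟩
  rw [h, Polynomial.coe_mul, Polynomial.coe_pow, Polynomial.coe_X]

section Subring

variable {F : Type*} [Field F] (f : Polynomial F)

def sIntegers : Subring F⟦X⟧ where
  carrier := Rset f
  one_mem' := ⟨0, 1, by simp⟩
  mul_mem' := by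
    rintro a b ⟨m, p, hp⟩ ⟨n, q, hq⟩
    exact ⟨m + n, p * q, by rw [Polynomial.coe_mul, ← hp, ← hq]; ring⟩
  zero_mem' := ⟨0, 0, by simp⟩
  add_mem' := by
    rintro a b ⟨m, p, hp⟩ ⟨n, q, hq⟩
    refine ⟨m + n, f ^ n * p + f ^ m * q, ?_⟩
    rw [Polynomial.coe_add, Polynomial.coe_mul, Polynomial.coe_mul, Polynomial.coe_pow,
      Polynomial.coe_pow, ← hp, ← hq]
    ring
  neg_mem' := by
    rintro a ⟨m, p, hp⟩
    exact ⟨m, -p, by rw [Polynomial.coe_neg, ← hp, mul_neg]⟩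

theorem mem_sIntegers {β : F⟦X⟧} : β ∈ sIntegers f ↔ β ∈ Rset f := Iff.rfl

theorem coe_mem_sIntegers (p : Polynomial F) : (p : F⟦X⟧) ∈ sIntegers f :=
  ⟨0, p, by simp⟩

theorem mem_sIntegers_of_X_pow_mul_mem {j : ℕ} {φ : F⟦X⟧} (h : X ^ j * φ ∈ sIntegers f) :
    φ ∈ sIntegers f := by
  obtain ⟨m, p, hp⟩ := h
  have hp' : X ^ j * ((f : F⟦X⟧) ^ m * φ) = (p : F⟦X⟧) := by rw [← hp]; ring
  obtain ⟨q, hq⟩ := exists_coe_eq_of_X_pow_mul_eq_coe hp'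
  exact ⟨m, q, hq⟩

end Subring

theorem mem_sIntegers_iff_shift_mem_general {F : Type*} [Field F]
    (f : Polynomial F) (β : PowerSeries F) (j : ℕ) :
    β ∈ Rset f ↔ shift j β ∈ Rset f := by
  have hX : (X : F⟦X⟧) ^ j ∈ sIntegers f := by
    simpa using coe_mem_sIntegers f (Polynomial.X ^ j)
  have htrunc := coe_mem_sIntegers f (trunc j β)
  rw [← mem_sIntegers, ← mem_sIntegers]
  constructor
  · intro hβ
    refine mem_sIntegers_of_X_pow_mul_mem f (j := j) ?_
    rw [← add_sub_cancel_right (X ^ j * shift j β) (trunc j β : F⟦X⟧),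
      X_pow_mul_shift_add_trunc]
    exact sub_mem hβ htrunc
  · intro hshift
    rw [← X_pow_mul_shift_add_trunc j β]
    exact add_mem (mul_mem hX hshift) htrunc

/-- Let `F` be a field and `f ∈ F[X]` a polynomial with `f(0) ≠ 0`.  Then
for every `β ∈ F⟦X⟧` and every `j : ℕ`, `β` lies in `R = F[X][1/f] ⊆ F⟦X⟧` if and only if
`shift_j β` does. -/
theorem mem_sIntegers_iff_shift_mem {F : Type*} [Field F]
    (f : Polynomial F) (hf : f.eval 0 ≠ 0) (β : PowerSeries F) (j : ℕ) :
    β ∈ Rset f ↔ shift j β ∈ Rset f :=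
  mem_sIntegers_iff_shift_mem_general f β j

end RoverNekrashevych
end
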